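/- Let s ∈ {0,1} and κ ∈ ℂ, with κ ≠ 0 in the case s = 0. Let σ, σ̃ : ℝ → ℂ be twice differentiable functions. Suppose R : ℝ → Matrix (Fin 3) (Fin 3) ℂ is differentiable, R(x) is unit lower triangular for every x ∈ [0,1], R(0) is the identity matrix, and R'(x) + R(x)·F(σ̃)(x) = F(σ)(x)·R(x) for all x ∈ [0,1]. Then σ(x) = σ̃(x) for all x ∈ [0,1], and R(x) is the identity matrix for all x ∈ [0,1]. -/

import Mathlib

/-- The matrix F(σ) associated with the differential expression
ℓ_{σ,s,κ}(y) = y''' + s(σ'y)' + sσ'y' + κσ''y. -/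
noncomputable def Fmat (s κ : ℂ) (σ : ℝ → ℂ) (x : ℝ) : Matrix (Fin 3) (Fin 3) ℂ :=
  !![ -(s + κ) * σ x, 1, 0;
      -(3 * κ ^ 2 / 2 + s ^ 2 / 2 + 2 * κ * s) * σ x ^ 2, 2 * κ * σ x, 1;
      κ * (κ ^ 2 - s ^ 2) * σ x ^ 3,
        -(3 * κ ^ 2 / 2 + s ^ 2 / 2 - 2 * κ * s) * σ x ^ 2, (s - κ) * σ x ]

/-- A 3×3 matrix is unit lower triangular if its diagonal entries are 1 and the
entries above the diagonal are 0. -/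
def UnitLowerTriangular (A : Matrix (Fin 3) (Fin 3) ℂ) : Prop :=
  (∀ i, A i i = 1) ∧ ∀ i j : Fin 3, i < j → A i j = 0

private lemma const_on_Icc (f : ℝ → ℂ) (hf : Differentiable ℝ f)
    (h : ∀ x ∈ Set.Icc (0:ℝ) 1, deriv f x = 0) :
    ∀ x ∈ Set.Icc (0:ℝ) 1, f x = f 0 :=
  constant_of_has_deriv_right_zero hf.continuous.continuousOn (fun x hx => by
    have := (hf x).hasDerivAt
    rw [h x (Set.Ico_subset_Icc_self hx)] at this
    exact this.hasDerivWithinAt)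

/-- Analytic core of the uniqueness theorem on the finite interval [0,1]: if R is a
differentiable matrix function that is unit lower triangular on [0,1], equals the
identity at x = 0, and satisfies R' + R·F(σ̃) = F(σ)·R on [0,1] (with s ∈ {0,1},
κ ≠ 0 when s = 0, and σ, σ̃ twice differentiable), then σ = σ̃ on [0,1] and R is the
identity matrix on [0,1]. -/
theorem uniqueness_finite_interval (s : ℂ) (hs : s = 0 ∨ s = 1) (κ : ℂ)
    (hκ : s = 0 → κ ≠ 0) (σ σtil : ℝ → ℂ)
    (hσ1 : Differentiable ℝ σ) (hσ2 : Differentiable ℝ (deriv σ))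
    (hσtil1 : Differentiable ℝ σtil) (hσtil2 : Differentiable ℝ (deriv σtil))
    (R R' : ℝ → Matrix (Fin 3) (Fin 3) ℂ)
    (hR : ∀ (x : ℝ) (i j : Fin 3), HasDerivAt (fun t => R t i j) (R' x i j) x)
    (hTri : ∀ x ∈ Set.Icc (0 : ℝ) 1, UnitLowerTriangular (R x))
    (hR0 : R 0 = 1)
    (heq : ∀ x ∈ Set.Icc (0 : ℝ) 1,
      R' x + R x * Fmat s κ σtil x = Fmat s κ σ x * R x) :
    (∀ x ∈ Set.Icc (0 : ℝ) 1, σ x = σtil x)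
    ∧ ∀ x ∈ Set.Icc (0 : ℝ) 1, R x = 1 := by
  have hU : UniqueDiffOn ℝ (Set.Icc (0:ℝ) 1) := uniqueDiffOn_Icc one_pos
  have h0I : (0:ℝ) ∈ Set.Icc (0:ℝ) 1 := by norm_num
  -- substitute-known-function device for the derivative entries
  have hderivW : ∀ x ∈ Set.Icc (0:ℝ) 1, ∀ (i j : Fin 3) (f : ℝ → ℂ) (f' : ℂ),
      (∀ t ∈ Set.Icc (0:ℝ) 1, R t i j = f t) → HasDerivAt f f' x → R' x i j = f' := by
    intro x hx i j f f' hfeq hf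
    have h1 : derivWithin (fun t => R t i j) (Set.Icc 0 1) x = R' x i j :=
      (hR x i j).hasDerivWithinAt.derivWithin (hU x hx)
    have h2 : derivWithin (fun t => R t i j) (Set.Icc 0 1) x = derivWithin f (Set.Icc 0 1) x :=
      derivWithin_congr hfeq (hfeq x hx)
    have h3 : derivWithin f (Set.Icc 0 1) x = f' := hf.hasDerivWithinAt.derivWithin (hU x hx)
    rw [← h1, h2, h3]
  have key : ∀ x ∈ Set.Icc (0:ℝ) 1, ∀ i j : Fin 3,
      R' x i j + (R x i 0 * Fmat s κ σtil x 0 j + R x i 1 * Fmat s κ σtil x 1 j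
        + R x i 2 * Fmat s κ σtil x 2 j)
      = Fmat s κ σ x i 0 * R x 0 j + Fmat s κ σ x i 1 * R x 1 j
        + Fmat s κ σ x i 2 * R x 2 j := by
    intro x hx i j
    have h := congrFun (congrFun (heq x hx) i) j
    simpa [Matrix.add_apply, Matrix.mul_apply, Fin.sum_univ_three] using h
  -- triangularity facts
  have t00 : ∀ x ∈ Set.Icc (0:ℝ) 1, R x 0 0 = 1 := fun x hx => (hTri x hx).1 0
  have t11 : ∀ x ∈ Set.Icc (0:ℝ) 1, R x 1 1 = 1 := fun x hx => (hTri x hx).1 1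
  have t22 : ∀ x ∈ Set.Icc (0:ℝ) 1, R x 2 2 = 1 := fun x hx => (hTri x hx).1 2
  have t01 : ∀ x ∈ Set.Icc (0:ℝ) 1, R x 0 1 = 0 := fun x hx => (hTri x hx).2 0 1 (by decide)
  have t02 : ∀ x ∈ Set.Icc (0:ℝ) 1, R x 0 2 = 0 := fun x hx => (hTri x hx).2 0 2 (by decide)
  have t12 : ∀ x ∈ Set.Icc (0:ℝ) 1, R x 1 2 = 0 := fun x hx => (hTri x hx).2 1 2 (by decide)
  -- entry (0,0): formula for a = R x 1 0
  have hA : ∀ x ∈ Set.Icc (0:ℝ) 1, R x 1 0 = (s + κ) * (σ x - σtil x) := by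
    intro x hx
    have hz : R' x 0 0 = 0 := hderivW x hx 0 0 (fun _ => 1) 0 t00 (hasDerivAt_const x 1)
    have h := key x hx 0 0
    rw [hz, t00 x hx, t01 x hx, t02 x hx] at h
    show R x 1 0 = (s + κ) * (σ x - σtil x)
    simp only [Fmat, Matrix.cons_val', Matrix.cons_val_zero, Matrix.cons_val_one,
      Matrix.head_cons, Matrix.empty_val', Matrix.cons_val_fin_one, Matrix.head_fin_const,
      Matrix.of_apply, Matrix.cons_val_two, Matrix.tail_cons] at h
    linear_combination -h
  -- entry (1,1): formula for c = R x 2 1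
  have hC : ∀ x ∈ Set.Icc (0:ℝ) 1, R x 2 1 = (s - κ) * (σ x - σtil x) := by
    intro x hx
    have hz : R' x 1 1 = 0 := hderivW x hx 1 1 (fun _ => 1) 0 t11 (hasDerivAt_const x 1)
    have h := key x hx 1 1
    rw [hz, t11 x hx, t01 x hx, t12 x hx, hA x hx] at h
    simp only [Fmat, Matrix.cons_val', Matrix.cons_val_zero, Matrix.cons_val_one,
      Matrix.head_cons, Matrix.empty_val', Matrix.cons_val_fin_one, Matrix.head_fin_const,
      Matrix.of_apply, Matrix.cons_val_two, Matrix.tail_cons] at h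
    linear_combination -h
  -- derivatives of a and c
  have hA' : ∀ x ∈ Set.Icc (0:ℝ) 1, R' x 1 0 = (s + κ) * (deriv σ x - deriv σtil x) :=
    fun x hx => hderivW x hx 1 0 (fun t => (s + κ) * (σ t - σtil t)) _
      hA (((hσ1 x).hasDerivAt.sub (hσtil1 x).hasDerivAt).const_mul (s + κ))
  have hC' : ∀ x ∈ Set.Icc (0:ℝ) 1, R' x 2 1 = (s - κ) * (deriv σ x - deriv σtil x) :=
    fun x hx => hderivW x hx 2 1 (fun t => (s - κ) * (σ t - σtil t)) _
      hC (((hσ1 x).hasDerivAt.sub (hσtil1 x).hasDerivAt).const_mul (s - κ))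
  -- entry (1,0): formula for b = R x 2 0
  have hB : ∀ x ∈ Set.Icc (0:ℝ) 1, R x 2 0 =
      (s + κ) * (deriv σ x - deriv σtil x)
        - (s + κ) * (σ x - σtil x) * ((s + κ) * σtil x + 2 * κ * σ x)
        + (3 * κ ^ 2 / 2 + s ^ 2 / 2 + 2 * κ * s) * (σ x ^ 2 - σtil x ^ 2) := by
    intro x hx
    have h := key x hx 1 0
    rw [hA' x hx, hA x hx, t00 x hx, t11 x hx, t12 x hx] at h
    simp only [Fmat, Matrix.cons_val', Matrix.cons_val_zero, Matrix.cons_val_one,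
      Matrix.head_cons, Matrix.empty_val', Matrix.cons_val_fin_one, Matrix.head_fin_const,
      Matrix.of_apply, Matrix.cons_val_two, Matrix.tail_cons] at h
    linear_combination -h
  -- entry (2,1): the key scalar identity  2 s δ' = 0
  have hE : ∀ x ∈ Set.Icc (0:ℝ) 1, s * (deriv σ x - deriv σtil x) = 0 := by
    intro x hx
    have h := key x hx 2 1
    rw [hC' x hx, hC x hx, hB x hx, t01 x hx, t11 x hx, t22 x hx] at h
    simp only [Fmat, Matrix.cons_val', Matrix.cons_val_zero, Matrix.cons_val_one,
      Matrix.head_cons, Matrix.empty_val', Matrix.cons_val_fin_one, Matrix.head_fin_const,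
      Matrix.of_apply, Matrix.cons_val_two, Matrix.tail_cons] at h
    linear_combination h / 2
  have hR010 : R 0 1 0 = 0 := by rw [hR0]; rfl
  have hR020 : R 0 2 0 = 0 := by rw [hR0]; rfl
  have hR021 : R 0 2 1 = 0 := by rw [hR0]; rfl
  obtain ⟨hδ0, hd10⟩ : (∀ x ∈ Set.Icc (0:ℝ) 1, σ x - σtil x = 0)
      ∧ (∀ x ∈ Set.Icc (0:ℝ) 1, deriv σ x - deriv σtil x = 0) := by
    rcases hs with hs0 | hs1
    · -- case s = 0
      subst hs0
      have hκ0 : κ ≠ 0 := hκ rfl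
      set g : ℝ → ℂ := fun t => (0 + κ) * (deriv σ t - deriv σtil t)
        - (0 + κ) * ((σ t - σtil t) * ((0 + κ) * σtil t + 2 * κ * σ t))
        + (3 * κ ^ 2 / 2 + 0 ^ 2 / 2 + 2 * κ * 0) * (σ t * σ t - σtil t * σtil t) with hgdef
      have hg : ∀ x, HasDerivAt g ((0 + κ) * (deriv (deriv σ) x - deriv (deriv σtil) x)
          - (0 + κ) * ((deriv σ x - deriv σtil x) * ((0 + κ) * σtil x + 2 * κ * σ x)
            + (σ x - σtil x) * ((0 + κ) * deriv σtil x + 2 * κ * deriv σ x))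
          + (3 * κ ^ 2 / 2 + 0 ^ 2 / 2 + 2 * κ * 0)
            * (deriv σ x * σ x + σ x * deriv σ x
              - (deriv σtil x * σtil x + σtil x * deriv σtil x))) x := by
        intro x
        have hd1 : HasDerivAt (fun t => σ t - σtil t) (deriv σ x - deriv σtil x) x :=
          (hσ1 x).hasDerivAt.sub (hσtil1 x).hasDerivAt
        have hd2 : HasDerivAt (fun t => deriv σ t - deriv σtil t)
            (deriv (deriv σ) x - deriv (deriv σtil) x) x :=
          (hσ2 x).hasDerivAt.sub (hσtil2 x).hasDerivAt
        have hlin : HasDerivAt (fun t => (0 + κ) * σtil t + 2 * κ * σ t)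
            ((0 + κ) * deriv σtil x + 2 * κ * deriv σ x) x :=
          ((hσtil1 x).hasDerivAt.const_mul _).add ((hσ1 x).hasDerivAt.const_mul _)
        have hsq : HasDerivAt (fun t => σ t * σ t - σtil t * σtil t)
            (deriv σ x * σ x + σ x * deriv σ x
              - (deriv σtil x * σtil x + σtil x * deriv σtil x)) x :=
          ((hσ1 x).hasDerivAt.mul (hσ1 x).hasDerivAt).sub
            ((hσtil1 x).hasDerivAt.mul (hσtil1 x).hasDerivAt)
        exact ((hd2.const_mul (0 + κ)).sub ((hd1.mul hlin).const_mul (0 + κ))).add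
          (hsq.const_mul (3 * κ ^ 2 / 2 + 0 ^ 2 / 2 + 2 * κ * 0))
      have hB' : ∀ x ∈ Set.Icc (0:ℝ) 1, R' x 2 0 =
          (0 + κ) * (deriv (deriv σ) x - deriv (deriv σtil) x)
          - (0 + κ) * ((deriv σ x - deriv σtil x) * ((0 + κ) * σtil x + 2 * κ * σ x)
            + (σ x - σtil x) * ((0 + κ) * deriv σtil x + 2 * κ * deriv σ x))
          + (3 * κ ^ 2 / 2 + 0 ^ 2 / 2 + 2 * κ * 0)
            * (deriv σ x * σ x + σ x * deriv σ x
              - (deriv σtil x * σtil x + σtil x * deriv σtil x)) :=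
        fun x hx => hderivW x hx 2 0 g _ (fun t ht => by rw [hB t ht]; ring) (hg x)
      have hd20 : ∀ x ∈ Set.Icc (0:ℝ) 1, deriv (deriv σ) x - deriv (deriv σtil) x = 0 := by
        intro x hx
        have h := key x hx 2 0
        rw [hB' x hx, hB x hx, hA x hx, hC x hx, t00 x hx, t22 x hx] at h
        simp only [Fmat, Matrix.cons_val', Matrix.cons_val_zero, Matrix.cons_val_one,
          Matrix.head_cons, Matrix.empty_val', Matrix.cons_val_fin_one, Matrix.head_fin_const,
          Matrix.of_apply, Matrix.cons_val_two, Matrix.tail_cons] at h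
        have hk : κ * (deriv (deriv σ) x - deriv (deriv σtil) x) = 0 := by
          linear_combination h
        exact (mul_eq_zero.mp hk).resolve_left hκ0
      have hδ00 : σ 0 - σtil 0 = 0 := by
        have h1 : (0 + κ) * (σ 0 - σtil 0) = 0 := by rw [← hA 0 h0I, hR010]
        have : (0 + κ) ≠ 0 := by simpa using hκ0
        exact (mul_eq_zero.mp h1).resolve_left this
      have hd100 : deriv σ 0 - deriv σtil 0 = 0 := by
        have h := hB 0 h0I
        rw [hR020] at h
        have hk : κ * (deriv σ 0 - deriv σtil 0) = 0 := by
          linear_combination -h + (κ * ((0 + κ) * σtil 0 + 2 * κ * σ 0)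
            - (3 * κ ^ 2 / 2 + 0 ^ 2 / 2 + 2 * κ * 0) * (σ 0 + σtil 0)) * hδ00
        exact (mul_eq_zero.mp hk).resolve_left hκ0
      have hd10 : ∀ x ∈ Set.Icc (0:ℝ) 1, deriv σ x - deriv σtil x = 0 := by
        intro x hx
        have := const_on_Icc (fun t => deriv σ t - deriv σtil t) (hσ2.sub hσtil2)
          (fun y hy => by rw [deriv_fun_sub (hσ2 y) (hσtil2 y)]; exact hd20 y hy) x hx
        simpa [hd100] using this
      refine ⟨?_, hd10⟩
      intro x hx
      have := const_on_Icc (fun t => σ t - σtil t) (hσ1.sub hσtil1) (fun y hy => by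
        rw [deriv_fun_sub (hσ1 y) (hσtil1 y)]; exact hd10 y hy) x hx
      simpa [hδ00] using this
    · -- case s = 1
      subst hs1
      have hd10 : ∀ x ∈ Set.Icc (0:ℝ) 1, deriv σ x - deriv σtil x = 0 := by
        intro x hx
        have := hE x hx
        simpa using this
      refine ⟨?_, hd10⟩
      have hδ00 : σ 0 - σtil 0 = 0 := by
        have h1 := hA 0 h0I
        have h2 := hC 0 h0I
        rw [hR010] at h1; rw [hR021] at h2
        linear_combination (-h1 - h2) / 2
      intro x hx
      have := const_on_Icc (fun t => σ t - σtil t) (hσ1.sub hσtil1) (fun y hy => by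
        rw [deriv_fun_sub (hσ1 y) (hσtil1 y)]; exact hd10 y hy) x hx
      simpa [hδ00] using this
  refine ⟨fun x hx => sub_eq_zero.mp (hδ0 x hx), fun x hx => ?_⟩
  have ha0 : R x 1 0 = 0 := by rw [hA x hx, hδ0 x hx]; ring
  have hc0 : R x 2 1 = 0 := by rw [hC x hx, hδ0 x hx]; ring
  have hb0 : R x 2 0 = 0 := by
    rw [hB x hx]
    have h1 := hδ0 x hx; have h2 := hd10 x hx
    linear_combination (s + κ) * h2 + (-((s + κ) * ((s + κ) * σtil x + 2 * κ * σ x))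
      + (3 * κ ^ 2 / 2 + s ^ 2 / 2 + 2 * κ * s) * (σ x + σtil x)) * h1
  ext i j
  fin_cases i <;> fin_cases j <;>
    simp [t00 x hx, t11 x hx, t22 x hx, t01 x hx, t02 x hx, t12 x hx, ha0, hb0, hc0,
      Matrix.one_apply]
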